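/- Let G be a connected plane graph with minimum degree at least 3 that contains no cycle of length 4, no cycle of length 7, no cycle of length 9, and no 5-cycle normally adjacent to a 3-cycle. Then every vertex of degree 3 in G is incident with at most two 5-faces. -/

import Mathlib

/-!
Suppose a vertex `v` of degree 3 lies on three 5-faces. The rotation at `v` cycles its three
darts, so the faces read `v a₁ b₁ c₁ a₃`, `v a₂ b₂ c₂ a₁`, `v a₃ b₃ c₃ a₂`, and
`a₁ b₁ c₁ a₃ b₃ c₃ a₂ b₂ c₂` is a closed walk of length 9. Its vertices are distinct, so it is a
9-cycle. Indeed every coincidence of two of them, except `b₁ = c₂`, gives two distinct vertices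
with two common neighbours, that is a 4-cycle. If `b₁ = c₂`, the first two faces pass through
`a₁` as `v a₁ b₁` and `b₁ a₁ v`, so the rotation at `a₁` swaps its darts towards `v` and `b₁`,
and `a₁` has degree 2.
-/

namespace Paper

open SimpleGraph

variable {V : Type*}

/-- The fixed-point-free involution on darts reversing each dart. -/
def dartFlip (G : SimpleGraph V) : Equiv.Perm G.Dart :=
  ⟨SimpleGraph.Dart.symm, SimpleGraph.Dart.symm,
    fun d => SimpleGraph.Dart.symm_symm d, fun d => SimpleGraph.Dart.symm_symm d⟩

/-- A combinatorial embedding (rotation system) of a simple graph: a permutation of the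
darts whose cycles are exactly the sets of darts emanating from a common vertex. -/
structure PlaneEmbedding (G : SimpleGraph V) where
  rot : Equiv.Perm G.Dart
  fst_rot : ∀ d : G.Dart, (rot d).fst = d.fst
  rot_cyclic : ∀ d e : G.Dart, d.fst = e.fst → rot.SameCycle d e

/-- The face permutation of a combinatorial embedding; its orbits are the (boundary walks
of the) faces of the embedding. -/
def PlaneEmbedding.facePerm {G : SimpleGraph V} (E : PlaneEmbedding G) : Equiv.Perm G.Dart :=
  E.rot * dartFlip G

/-- The face (as its set of boundary darts, i.e. the orbit of the face permutation)
containing a given dart. -/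
def faceOf {G : SimpleGraph V} (E : PlaneEmbedding G) (d : G.Dart) : Set G.Dart :=
  {e | E.facePerm.SameCycle d e}

/-- The length of the boundary walk of the face containing a given dart; a `k`-face is a
face whose boundary walk has length `k`, i.e. whose dart-orbit has size `k`. -/
noncomputable def faceSize {G : SimpleGraph V} (E : PlaneEmbedding G) (d : G.Dart) : ℕ :=
  (faceOf E d).ncard

/-- The number of faces of the embedding lying in a given connected component. -/
noncomputable def componentFaceCount {G : SimpleGraph V} (E : PlaneEmbedding G)
    (c : G.ConnectedComponent) : ℕ :=
  Nat.card (Quotient (Setoid.comap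
    (Subtype.val : {d : G.Dart // G.connectedComponentMk d.fst = c} → G.Dart)
    (Equiv.Perm.SameCycle.setoid E.facePerm)))

/-- The embedding is plane (genus zero): Euler's formula `V - E + F = 2` holds on each
connected component containing an edge (stated as `2V + 2F = #darts + 4`, using that the
number of darts is twice the number of edges). -/
def PlaneEmbedding.IsPlane {G : SimpleGraph V} (E : PlaneEmbedding G) : Prop :=
  ∀ c : G.ConnectedComponent, (∃ d : G.Dart, G.connectedComponentMk d.fst = c) →
    2 * {v : V | G.connectedComponentMk v = c}.ncard + 2 * componentFaceCount E c
      = {d : G.Dart | G.connectedComponentMk d.fst = c}.ncard + 4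

/-- `G` is a planar graph: it admits a plane (genus-zero) combinatorial embedding. -/
def IsPlanar (G : SimpleGraph V) : Prop :=
  ∃ E : PlaneEmbedding G, E.IsPlane

/-- `G` has no cycle of length `n`. -/
def NoCycleLen (G : SimpleGraph V) (n : ℕ) : Prop :=
  ∀ (v : V) (c : G.Walk v v), c.IsCycle → c.length ≠ n

/-- Two cycles (given as closed walks) are normally adjacent: their intersection is
isomorphic to `K₂`, i.e. they share exactly one edge together with its two endpoints. -/
def NormAdjWalks (G : SimpleGraph V) {a b : V} (c₁ : G.Walk a a) (c₂ : G.Walk b b) : Prop :=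
  ∃ x y : V, x ≠ y ∧ s(x, y) ∈ c₁.edges ∧ s(x, y) ∈ c₂.edges ∧
    (∀ z : V, (z ∈ c₁.support ∧ z ∈ c₂.support) ↔ (z = x ∨ z = y))

/-- `G` has no `5`-cycle normally adjacent to a `3`-cycle. -/
def No5CycleNormAdj3 (G : SimpleGraph V) : Prop :=
  ∀ (a b : V) (c₁ : G.Walk a a) (c₂ : G.Walk b b),
    c₁.IsCycle → c₁.length = 5 → c₂.IsCycle → c₂.length = 3 →
      ¬ NormAdjWalks G c₁ c₂

/-- `d` lists the boundary darts of a face in order, and this boundary is the closed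
walk `v 0, v 1, …, v (n-1), v 0`. -/
def FaceTraversal {G : SimpleGraph V} (E : PlaneEmbedding G) {n : ℕ}
    (v : ZMod n → V) (d : ZMod n → G.Dart) : Prop :=
  (∀ i, (d i).toProd = (v i, v (i + 1))) ∧ ∀ i, E.facePerm (d i) = d (i + 1)

/-- The cycle `v 0, v 1, …, v (n-1), v 0` (with distinct vertices) bounds a face of the
embedding (traversed in one of the two possible directions). -/
def CycleBoundsFace {G : SimpleGraph V} (E : PlaneEmbedding G) {n : ℕ}
    (v : ZMod n → V) : Prop :=
  Function.Injective v ∧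
    ((∃ d, FaceTraversal E v d) ∨ (∃ d, FaceTraversal E (fun i => v (-i)) d))

/-- The `i`-th vertex of the boundary walk of the face containing the dart `d0`. -/
def boundaryVert {G : SimpleGraph V} (E : PlaneEmbedding G) (d0 : G.Dart) (i : ℕ) : V :=
  ((E.facePerm ^ i) d0).fst

/-- The faces containing the darts `d1`, `d2` are adjacent: their boundaries share at
least one edge. -/
def FacesAdjacent {G : SimpleGraph V} (E : PlaneEmbedding G) (d1 d2 : G.Dart) : Prop :=
  ∃ e1 e2 : G.Dart, E.facePerm.SameCycle d1 e1 ∧ E.facePerm.SameCycle d2 e2 ∧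
    e1.edge = e2.edge

/-- The set of vertices on the boundary of the face containing the dart `d`. -/
def faceVerts {G : SimpleGraph V} (E : PlaneEmbedding G) (d : G.Dart) : Set V :=
  {x | ∃ e : G.Dart, E.facePerm.SameCycle d e ∧ e.fst = x}

/-- The set of edges on the boundary of the face containing the dart `d`. -/
def faceEdges {G : SimpleGraph V} (E : PlaneEmbedding G) (d : G.Dart) : Set (Sym2 V) :=
  {s | ∃ e : G.Dart, E.facePerm.SameCycle d e ∧ e.edge = s}

section Configs

variable [Fintype V]

/-- Configuration (1): a `10`-cycle bounding a face together with a `3`-cycle bounding a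
face, normally adjacent to it along one edge, all eleven vertices having degree `3`. -/
def Config1 (G : SimpleGraph V) [DecidableRel G.Adj] (E : PlaneEmbedding G) : Prop :=
  ∃ (v : ZMod 10 → V) (w : ZMod 3 → V) (u : V),
    CycleBoundsFace E v ∧ CycleBoundsFace E w ∧
    ({w 0, w 1, w 2} : Set V) = {v 0, v 1, u} ∧ u ∉ Set.range v ∧
    (∀ i, G.degree (v i) = 3) ∧ G.degree u = 3

/-- Configuration (2): two vertex-disjoint `10`-cycles `x₁…x₁₀` and `y₁…y₁₀` (indexed here
from `0`), each bounding a face, with edges `x₃y₃` and `x₁₀y₁₀`; all `xᵢ` have degree `3`,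
`y₃` and `y₁₀` have degree `4`, the other `yᵢ` have degree `3`. -/
def Config2 (G : SimpleGraph V) [DecidableRel G.Adj] (E : PlaneEmbedding G) : Prop :=
  ∃ x y : ZMod 10 → V,
    CycleBoundsFace E x ∧ CycleBoundsFace E y ∧
    Set.range x ∩ Set.range y = ∅ ∧
    G.Adj (x 2) (y 2) ∧ G.Adj (x 9) (y 9) ∧
    (∀ i, G.degree (x i) = 3) ∧
    G.degree (y 2) = 4 ∧ G.degree (y 9) = 4 ∧
    (∀ i, i ≠ 2 → i ≠ 9 → G.degree (y i) = 3)

/-- Configuration (3): an `8`-cycle bounding a face and a `5`-cycle bounding a face that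
are normally adjacent (sharing exactly one edge and its endpoints), all eleven vertices
having degree `3`. -/
def Config3 (G : SimpleGraph V) [DecidableRel G.Adj] (E : PlaneEmbedding G) : Prop :=
  ∃ (a : ZMod 8 → V) (b : ZMod 5 → V),
    CycleBoundsFace E a ∧ CycleBoundsFace E b ∧
    Set.range a ∩ Set.range b = {a 0, a 1} ∧
    (∃ j : ZMod 5, (b j = a 0 ∧ b (j + 1) = a 1) ∨ (b j = a 1 ∧ b (j + 1) = a 0)) ∧
    (∀ i, G.degree (a i) = 3) ∧ (∀ j, G.degree (b j) = 3)

end Configs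

open Classical in
/-- The function resulting from the operation `Delete_[u](G, f)`: every neighbour of `u`
loses one unit. -/
noncomputable def deleteFun (G : SimpleGraph V) (u : V) (f : V → ℤ) : V → ℤ :=
  fun v => if G.Adj u v then f v - 1 else f v

open Classical in
/-- The function resulting from the operation `DeleteSave_[u; w](G, f)`: every neighbour
of `u` except `w` loses one unit. -/
noncomputable def deleteSaveFun (G : SimpleGraph V) (u w : V) (f : V → ℤ) : V → ℤ :=
  fun v => if G.Adj u v ∧ v ≠ w then f v - 1 else f v

/-- All vertices of the subgraph of `G` induced on `S` can be removed by a sequence of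
legal applications of the `Delete` and `DeleteSave` operations, starting from the value
function `f`. -/
inductive WeaklyReducible (G : SimpleGraph V) : Set V → (V → ℤ) → Prop
  | empty (f : V → ℤ) : WeaklyReducible G ∅ f
  | delete (S : Set V) (f : V → ℤ) (u : V) (hu : u ∈ S)
      (hnn : ∀ v ∈ S \ {u}, 0 ≤ deleteFun G u f v)
      (h : WeaklyReducible G (S \ {u}) (deleteFun G u f)) : WeaklyReducible G S f
  | deleteSave (S : Set V) (f : V → ℤ) (u w : V) (hu : u ∈ S) (hw : w ∈ S \ {u})
      (hadj : G.Adj u w) (hlt : f w < f u)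
      (hnn : ∀ v ∈ S \ {u}, 0 ≤ deleteSaveFun G u w f v)
      (h : WeaklyReducible G (S \ {u}) (deleteSaveFun G u w f)) : WeaklyReducible G S f

/-- `G` is weakly `d`-degenerate: all its vertices can be removed by a sequence of legal
applications of the `Delete` and `DeleteSave` operations, starting from the constant
function of value `d`. -/
def WeaklyDegenerate (G : SimpleGraph V) (d : ℤ) : Prop :=
  WeaklyReducible G Set.univ (fun _ => d)

/-- The canonical cover of `G` with `s = 2`: two disjoint copies of `G`, on vertex set
`V × Fin 2`, with `(u, i)` adjacent to `(v, j)` iff `uv ∈ E(G)` and `i = j`. -/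
def canonicalCover2 (G : SimpleGraph V) : SimpleGraph (V × Fin 2) where
  Adj a b := G.Adj a.1 b.1 ∧ a.2 = b.2
  symm := ⟨fun _ _ h => ⟨h.1.symm, h.2.symm⟩⟩
  loopless := ⟨fun a h => G.loopless.1 a.1 h.1⟩

/-- `T` is a strictly `f`-degenerate transversal-candidate set: every nonempty subgraph
`K` of the induced subgraph `H[T]` has a vertex `x` with `deg_K x < f x`. -/
def StrictlyFDegenerateOn {W : Type*} (H : SimpleGraph W) (f : W → ℕ) (T : Set W) : Prop :=
  ∀ K : H.Subgraph, K.verts ⊆ T → K.verts.Nonempty →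
    ∃ x ∈ K.verts, Nat.card (K.neighborSet x) < f x

end Paper

namespace Equiv.Perm

variable {α : Type*}

theorem isCycleOn_setOf_sameCycle (f : Perm α) (x : α) : f.IsCycleOn {y | f.SameCycle x y} :=
  ⟨⟨fun _ hy => sameCycle_apply_right.mpr hy, f.injective.injOn,
      fun y hy => ⟨f.symm y, sameCycle_symm_apply_right.mpr hy, f.apply_symm_apply y⟩⟩,
    fun _ hy _ hz => hy.symm.trans hz⟩

theorem pow_apply_eq_self_iff_ncard_sameCycle_dvd [Finite α] (f : Perm α) (x : α) (n : ℕ) :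
    (f ^ n) x = x ↔ {y | f.SameCycle x y}.ncard ∣ n := by
  have hs : {y | f.SameCycle x y}.Finite := Set.toFinite _
  rw [Set.ncard_eq_toFinset_card _ hs]
  exact IsCycleOn.pow_apply_eq (by simpa using f.isCycleOn_setOf_sameCycle x)
    (hs.mem_toFinset.mpr SameCycle.rfl)

end Equiv.Perm

theorem List.nodup_append_append_of_nodup_append {α : Type*} {l₁ l₂ l₃ : List α}
    (h₁₂ : (l₁ ++ l₂).Nodup) (h₂₃ : (l₂ ++ l₃).Nodup) (h₃₁ : (l₃ ++ l₁).Nodup) :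
    (l₁ ++ l₂ ++ l₃).Nodup := by
  rw [List.nodup_append] at h₂₃ h₃₁ ⊢
  refine ⟨h₁₂, h₂₃.2.1, fun a ha b hb => ?_⟩
  rcases List.mem_append.mp ha with ha | ha
  · exact (h₃₁.2.2 b hb a ha).symm
  · exact h₂₃.2.2 a ha b hb

namespace Paper

open SimpleGraph

variable {V : Type*} {G : SimpleGraph V}

theorem exists_isCycle_of_isChain {l : List V} (hl : l ≠ []) (hnodup : l.Nodup)
    (hchain : l.IsChain G.Adj) (hclose : G.Adj (l.getLast hl) (l.head hl)) (hlen : 3 ≤ l.length) :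
    ∃ (v : V) (c : G.Walk v v), c.IsCycle ∧ c.length = l.length := by
  set p := Walk.ofSupport l hl hchain
  have hp : p.IsPath := by rw [Walk.isPath_def, Walk.support_ofSupport]; exact hnodup
  refine ⟨_, .cons hclose p, (Walk.cons_isCycle_iff p hclose).mpr ⟨hp, fun he => ?_⟩, ?_⟩
  · have := hp.length_eq_one_of_mem_edges (Sym2.eq_swap ▸ he)
    simp only [p, Walk.length_ofSupport] at this
    omega
  · simp only [Walk.length_cons, p, Walk.length_ofSupport]
    omega

theorem NoCycleLen.subsingleton_commonNeighbors (h4 : NoCycleLen G 4) {x y : V} (hxy : x ≠ y) :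
    (G.commonNeighbors x y).Subsingleton := by
  rintro p ⟨hxp : G.Adj x p, hyp : G.Adj y p⟩ q ⟨hxq : G.Adj x q, hyq : G.Adj y q⟩
  by_contra hpq
  obtain ⟨_, c, hc, hlen⟩ := exists_isCycle_of_isChain (l := [x, p, y, q]) (by simp)
    (by simp [hxy, hpq, hxp.ne, hxq.ne, hyp.ne', hyq.ne])
    (by simp [hxp, hyp.symm, hyq]) hxq.symm (by simp)
  exact h4 _ c hc hlen

namespace PlaneEmbedding

variable (E : PlaneEmbedding G)

theorem facePerm_apply (d : G.Dart) : E.facePerm d = E.rot d.symm := rfl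

theorem fst_facePerm (d : G.Dart) : (E.facePerm d).fst = d.snd := E.fst_rot d.symm

theorem fst_rot_pow (d : G.Dart) (n : ℕ) : ((E.rot ^ n) d).fst = d.fst := by
  induction n with
  | zero => rfl
  | succ n ih => rw [pow_succ', Equiv.Perm.mul_apply, E.fst_rot, ih]

theorem boundaryVert_one (d : G.Dart) : boundaryVert E d 1 = d.snd := E.fst_facePerm d

theorem boundaryVert_succ (d : G.Dart) (i : ℕ) :
    boundaryVert E d (i + 1) = ((E.facePerm ^ i) d).snd := by
  rw [boundaryVert, pow_succ', Equiv.Perm.mul_apply, fst_facePerm]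

theorem adj_boundaryVert (d : G.Dart) (i : ℕ) :
    G.Adj (boundaryVert E d i) (boundaryVert E d (i + 1)) :=
  E.boundaryVert_succ d i ▸ ((E.facePerm ^ i) d).adj

theorem boundaryVert_add_of_pow_apply {d : G.Dart} {n : ℕ} (h : (E.facePerm ^ n) d = d)
    (i : ℕ) : boundaryVert E d (i + n) = boundaryVert E d i := by
  rw [boundaryVert, pow_add, Equiv.Perm.mul_apply, h, boundaryVert]

theorem facePerm_pow_eq_symm_of_rot {d d' : G.Dart} {n : ℕ} (h : (E.facePerm ^ (n + 1)) d = d)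
    (hrot : E.rot d' = d) : (E.facePerm ^ n) d = d'.symm := by
  apply E.facePerm.injective
  rw [← Equiv.Perm.mul_apply, ← pow_succ', h, facePerm_apply, Dart.symm_symm, hrot]

theorem boundaryVert_eq_snd_of_rot {d d' : G.Dart} {n : ℕ} (h : (E.facePerm ^ (n + 1)) d = d)
    (hrot : E.rot d' = d) : boundaryVert E d n = d'.snd :=
  congrArg (·.fst) (E.facePerm_pow_eq_symm_of_rot h hrot)

theorem boundaryVert_four_of_rot {d d' : G.Dart} (h5 : (E.facePerm ^ 5) d = d)
    (hrot : E.rot d' = d) : boundaryVert E d 4 = boundaryVert E d' 1 :=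
  (E.boundaryVert_eq_snd_of_rot h5 hrot).trans (E.boundaryVert_one d').symm

variable [Fintype V] [DecidableRel G.Adj]

theorem rot_pow_apply_eq_self_iff (d : G.Dart) (n : ℕ) :
    (E.rot ^ n) d = d ↔ G.degree d.fst ∣ n := by
  classical
  have horbit :
      {e | E.rot.SameCycle d e} = ↑(Finset.univ.filter fun e : G.Dart => e.fst = d.fst) := by
    ext e
    simp only [Set.mem_ofPred_eq, Finset.coe_filter, Finset.mem_univ, true_and]
    refine ⟨fun h => ?_, fun h => E.rot_cyclic d e h.symm⟩
    obtain ⟨i, -, rfl⟩ := h.exists_pow_eq'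
    exact E.fst_rot_pow d i
  rw [Equiv.Perm.pow_apply_eq_self_iff_ncard_sameCycle_dvd, horbit, Set.ncard_coe_finset,
    G.dart_fst_fiber_card_eq_degree]

theorem rot_ne_self {d : G.Dart} (h : 2 ≤ G.degree d.fst) : E.rot d ≠ d := fun hfix => by
  have := Nat.le_of_dvd one_pos ((E.rot_pow_apply_eq_self_iff d 1).mp (by simpa using hfix))
  omega

theorem rot_rot_ne_self {d : G.Dart} (h : 3 ≤ G.degree d.fst) : E.rot (E.rot d) ≠ d :=
  fun hfix => by
    have := Nat.le_of_dvd two_pos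
      ((E.rot_pow_apply_eq_self_iff d 2).mp (by simpa [pow_two] using hfix))
    omega

theorem facePerm_ne_symm {d : G.Dart} (h : 2 ≤ G.degree d.snd) : E.facePerm d ≠ d.symm :=
  E.rot_ne_self h

theorem degree_le_two_of_facePerm_symm {x y : G.Dart} (hy : E.facePerm y = x)
    (hx : E.facePerm x.symm = y.symm) : G.degree x.fst ≤ 2 := by
  have hfix : (E.rot ^ 2) y.symm = y.symm := by
    rw [pow_two, Equiv.Perm.mul_apply, ← E.facePerm_apply, hy]
    exact hx
  rw [← hy, fst_facePerm]
  exact Nat.le_of_dvd two_pos ((E.rot_pow_apply_eq_self_iff _ 2).mp hfix)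

theorem facePerm_pow_faceSize_apply (d : G.Dart) : (E.facePerm ^ faceSize E d) d = d :=
  (Equiv.Perm.pow_apply_eq_self_iff_ncard_sameCycle_dvd _ _ _).mpr dvd_rfl

theorem boundaryVert_add_two_ne (hmin : ∀ v, 2 ≤ G.degree v) (d : G.Dart) (i : ℕ) :
    boundaryVert E d (i + 2) ≠ boundaryVert E d i := by
  set e := (E.facePerm ^ i) d
  intro h
  refine E.facePerm_ne_symm (hmin e.snd) (Dart.ext _ _ (Prod.ext (E.fst_facePerm e) ?_))
  change (E.facePerm e).snd = boundaryVert E d i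
  rw [← h, boundaryVert_succ, pow_succ', Equiv.Perm.mul_apply]

theorem boundaryVert_ne (hmin : ∀ v, 2 ≤ G.degree v) {d : G.Dart}
    (h5 : (E.facePerm ^ 5) d = d) (i j : ℕ) (hij : i ≠ j := by norm_num)
    (hi : i < 5 := by norm_num) (hj : j < 5 := by norm_num) :
    boundaryVert E d i ≠ boundaryVert E d j := by
  wlog hlt : i < j generalizing i j
  · exact (this j i hij.symm hj hi (by omega)).symm
  obtain ⟨k, rfl⟩ := Nat.exists_eq_add_of_lt hlt
  have hper := E.boundaryVert_add_of_pow_apply h5 i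
  rcases (by omega : k = 0 ∨ k = 1 ∨ k = 2 ∨ k = 3) with rfl | rfl | rfl | rfl
  · exact (E.adj_boundaryVert d i).ne
  · exact (E.boundaryVert_add_two_ne hmin d i).symm
  · rw [← hper]; exact E.boundaryVert_add_two_ne hmin d (i + 3)
  · rw [← hper]; exact (E.adj_boundaryVert d (i + 4)).ne'

def boundaryArc (d : G.Dart) : List V :=
  [boundaryVert E d 1, boundaryVert E d 2, boundaryVert E d 3]

theorem nodup_boundaryArc (hmin : ∀ v, 2 ≤ G.degree v) {d : G.Dart}
    (h5 : (E.facePerm ^ 5) d = d) : (E.boundaryArc d).Nodup := by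
  simp [boundaryArc, E.boundaryVert_ne hmin h5 1 2, E.boundaryVert_ne hmin h5 1 3,
    E.boundaryVert_ne hmin h5 2 3]

theorem boundaryVert_three_ne_of_rot (hmin : ∀ v, 3 ≤ G.degree v) {d d' : G.Dart}
    (h5 : (E.facePerm ^ 5) d = d) (hrot : E.rot d' = d) :
    boundaryVert E d 3 ≠ boundaryVert E d' 2 := by
  intro h
  have hsymm : (E.facePerm ^ 3) d = (E.facePerm d').symm := by
    refine Dart.ext _ _ (Prod.ext ?_ ?_)
    · change boundaryVert E d 3 = (E.facePerm d').snd
      rw [h, boundaryVert_succ, pow_one]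
    · change ((E.facePerm ^ 3) d).snd = (E.facePerm d').fst
      rw [← boundaryVert_succ, fst_facePerm, E.boundaryVert_eq_snd_of_rot h5 hrot]
  have hx : E.facePerm (E.facePerm d').symm = d'.symm := by
    rw [← hsymm, ← Equiv.Perm.mul_apply, ← pow_succ', E.facePerm_pow_eq_symm_of_rot h5 hrot]
  have := E.degree_le_two_of_facePerm_symm rfl hx
  have := hmin (E.facePerm d').fst
  omega

theorem nodup_boundaryArc_append (hmin : ∀ v, 3 ≤ G.degree v) (h4 : NoCycleLen G 4)
    {d d' : G.Dart} (h5 : (E.facePerm ^ 5) d = d) (h5' : (E.facePerm ^ 5) d' = d')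
    (hrot : E.rot d' = d) : (E.boundaryArc d ++ E.boundaryArc d').Nodup := by
  have hmin2 : ∀ v, 2 ≤ G.degree v := fun v => le_trans (by norm_num) (hmin v)
  have ne (i j : ℕ) (hij : i ≠ j := by norm_num) (hi : i < 5 := by norm_num)
      (hj : j < 5 := by norm_num) := E.boundaryVert_ne hmin2 h5 i j hij hi hj
  have ne' (i j : ℕ) (hij : i ≠ j := by norm_num) (hi : i < 5 := by norm_num)
      (hj : j < 5 := by norm_num) := E.boundaryVert_ne hmin2 h5' i j hij hi hj
  have adj := E.adj_boundaryVert d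
  have adj' := E.adj_boundaryVert d'
  have hv : boundaryVert E d' 0 = boundaryVert E d 0 := by
    change d'.fst = d.fst; rw [← hrot, E.fst_rot]
  have hcyc : boundaryVert E d 5 = boundaryVert E d 0 := E.boundaryVert_add_of_pow_apply h5 0
  have hcyc' : boundaryVert E d' 5 = boundaryVert E d' 0 := E.boundaryVert_add_of_pow_apply h5' 0
  have he := E.boundaryVert_four_of_rot h5 hrot
  have he' : boundaryVert E d' 4 ≠ boundaryVert E d 1 := by
    rw [E.boundaryVert_eq_snd_of_rot h5' (E.rot.apply_symm_apply d'), boundaryVert_one, ← hrot]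
    intro h
    have hdart : E.rot.symm d' = E.rot d' := Dart.ext _ _ (Prod.ext
      (by rw [← E.fst_rot (E.rot.symm d'), Equiv.apply_symm_apply, E.fst_rot]) h)
    exact E.rot_rot_ne_self (hmin _) (by rw [Equiv.apply_symm_apply, hdart])
  have common := fun {x y : V} (hxy : x ≠ y) => h4.subsingleton_commonNeighbors hxy
  refine List.nodup_append.mpr ⟨E.nodup_boundaryArc hmin2 h5, E.nodup_boundaryArc hmin2 h5', ?_⟩
  simp only [boundaryArc, List.mem_cons, List.not_mem_nil, or_false]
  rintro x (rfl | rfl | rfl) y (rfl | rfl | rfl) h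
  · exact absurd (h.trans he.symm) (ne 1 4)
  · exact absurd (common (ne 1 3) ⟨adj 1, (adj 2).symm⟩
      ⟨by rw [h, he]; exact (adj' 1).symm, adj 3⟩) (ne 2 4)
  · exact absurd (common (ne' 0 2) ⟨adj' 0, (adj' 1).symm⟩
      ⟨by rw [hv, ← h]; exact adj 0, adj' 2⟩) (ne' 1 3)
  · exact absurd (h.trans he.symm) (ne 2 4)
  · exact absurd (common (ne 1 4) ⟨(adj 0).symm, by rw [← hcyc]; exact adj 4⟩
      ⟨adj 1, by rw [he, h]; exact adj' 1⟩) (ne 0 2)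
  · exact he' (common (ne 0 2) ⟨adj 0, (adj 1).symm⟩
      ⟨by rw [← hv, ← hcyc']; exact (adj' 4).symm, h ▸ adj' 3⟩).symm
  · exact absurd (h.trans he.symm) (ne 3 4)
  · exact E.boundaryVert_three_ne_of_rot hmin h5 hrot h
  · exact absurd (common (ne' 1 4) ⟨(adj' 0).symm, by rw [← hcyc']; exact adj' 4⟩
      ⟨by rw [← he, ← h]; exact (adj 3).symm, (adj' 3).symm⟩) (ne' 0 3)

theorem exists_faceSize_ne_five (hmin : ∀ v, 3 ≤ G.degree v) (h4 : NoCycleLen G 4)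
    (h9 : NoCycleLen G 9) {d : G.Dart} (hdeg : G.degree d.fst = 3) :
    ∃ e : G.Dart, e.fst = d.fst ∧ faceSize E e ≠ 5 := by
  by_contra! hface
  have h5 (n : ℕ) : (E.facePerm ^ 5) ((E.rot ^ n) d) = (E.rot ^ n) d :=
    hface _ (E.fst_rot_pow d n) ▸ E.facePerm_pow_faceSize_apply _
  have hrot3 : E.rot (E.rot (E.rot d)) = d := by
    simpa [pow_succ, Equiv.Perm.mul_apply] using
      (E.rot_pow_apply_eq_self_iff d 3).mpr (hdeg ▸ dvd_rfl)
  have h0 : (E.facePerm ^ 5) d = d := h5 0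
  have h1 : (E.facePerm ^ 5) (E.rot (E.rot d)) = E.rot (E.rot d) := by simpa [pow_two] using h5 2
  have h2 : (E.facePerm ^ 5) (E.rot d) = E.rot d := by simpa using h5 1
  have n01 := E.nodup_boundaryArc_append hmin h4 h0 h1 hrot3
  have n12 := E.nodup_boundaryArc_append hmin h4 h1 h2 rfl
  have n20 := E.nodup_boundaryArc_append hmin h4 h2 h0 rfl
  set l := E.boundaryArc d ++ E.boundaryArc (E.rot (E.rot d)) ++ E.boundaryArc (E.rot d)
  have hnodup : l.Nodup := List.nodup_append_append_of_nodup_append n01 n12 n20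
  have step {x y : G.Dart} (h5 : (E.facePerm ^ 5) x = x) (hrot : E.rot y = x) :
      G.Adj (boundaryVert E x 3) (boundaryVert E y 1) :=
    E.boundaryVert_four_of_rot h5 hrot ▸ E.adj_boundaryVert x 3
  have adj := E.adj_boundaryVert
  have hchain : l.IsChain G.Adj := by
    simp only [l, boundaryArc, List.cons_append, List.nil_append, List.isChain_cons_cons,
      List.isChain_singleton, and_true]
    exact ⟨adj _ 1, adj _ 2, step h0 hrot3, adj _ 1, adj _ 2, step h1 rfl, adj _ 1, adj _ 2⟩
  obtain ⟨_, c, hc, hlen⟩ := exists_isCycle_of_isChain (by simp [l, boundaryArc]) hnodup hchain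
    (by simpa [l, boundaryArc] using step h2 rfl) (by simp [l, boundaryArc])
  exact h9 _ c hc (by simp [hlen, l, boundaryArc])

end PlaneEmbedding

theorem eq_or_eq_or_eq_of_degree_eq_three [Fintype V] [DecidableRel G.Adj] {v : V}
    (hv : G.degree v = 3) {d₁ d₂ d₃ e : G.Dart} (h₁ : d₁.fst = v) (h₂ : d₂.fst = v)
    (h₃ : d₃.fst = v) (h₁₂ : d₁ ≠ d₂) (h₁₃ : d₁ ≠ d₃) (h₂₃ : d₂ ≠ d₃) (he : e.fst = v) :
    e = d₁ ∨ e = d₂ ∨ e = d₃ := by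
  classical
  have hfiber : {d₁, d₂, d₃} = Finset.univ.filter fun d : G.Dart => d.fst = v := by
    refine Finset.eq_of_subset_of_card_le (by simp [Finset.insert_subset_iff, h₁, h₂, h₃]) ?_
    rw [G.dart_fst_fiber_card_eq_degree, hv, Finset.card_insert_of_notMem (by simp [h₁₂, h₁₃]),
      Finset.card_insert_of_notMem (by simp [h₂₃]), Finset.card_singleton]
  have : e ∈ ({d₁, d₂, d₃} : Finset G.Dart) := by simp [hfiber, he]
  simpa using this

end Paper

open SimpleGraph

theorem statement11_general {V : Type*} [Fintype V] (G : SimpleGraph V) [DecidableRel G.Adj]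
    (E : Paper.PlaneEmbedding G)
    (hmin : ∀ v : V, 3 ≤ G.degree v)
    (h4 : Paper.NoCycleLen G 4)
    (h9 : Paper.NoCycleLen G 9) :
    ∀ v : V, G.degree v = 3 → ∀ d1 d2 d3 : G.Dart,
      d1.fst = v → d2.fst = v → d3.fst = v →
      Paper.faceSize E d1 = 5 → Paper.faceSize E d2 = 5 → Paper.faceSize E d3 = 5 →
      E.facePerm.SameCycle d1 d2 ∨ E.facePerm.SameCycle d1 d3 ∨
        E.facePerm.SameCycle d2 d3 := by
  intro v hv d1 d2 d3 hv1 hv2 hv3 hf1 hf2 hf3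
  by_contra! hsep
  obtain ⟨h12, h13, h23⟩ := hsep
  have ne_of_not_sameCycle {x y : G.Dart} (h : ¬E.facePerm.SameCycle x y) : x ≠ y :=
    fun hxy => h (hxy ▸ Equiv.Perm.SameCycle.refl _ _)
  obtain ⟨e, he, hfe⟩ := E.exists_faceSize_ne_five hmin h4 h9 (d := d1) (hv1 ▸ hv)
  rcases Paper.eq_or_eq_or_eq_of_degree_eq_three hv hv1 hv2 hv3 (ne_of_not_sameCycle h12)
    (ne_of_not_sameCycle h13) (ne_of_not_sameCycle h23) (he.trans hv1) with rfl | rfl | rfl <;>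
    contradiction

/-- Every vertex of degree 3 is incident with at most two 5-faces. -/
theorem statement11 {V : Type*} [Fintype V] (G : SimpleGraph V) [DecidableRel G.Adj]
    (hconn : G.Connected)
    (E : Paper.PlaneEmbedding G) (hE : E.IsPlane)
    (hmin : ∀ v : V, 3 ≤ G.degree v)
    (h4 : Paper.NoCycleLen G 4) (h7 : Paper.NoCycleLen G 7)
    (h9 : Paper.NoCycleLen G 9) (h53 : Paper.No5CycleNormAdj3 G) :
    ∀ v : V, G.degree v = 3 → ∀ d1 d2 d3 : G.Dart,
      d1.fst = v → d2.fst = v → d3.fst = v →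
      Paper.faceSize E d1 = 5 → Paper.faceSize E d2 = 5 → Paper.faceSize E d3 = 5 →
      E.facePerm.SameCycle d1 d2 ∨ E.facePerm.SameCycle d1 d3 ∨
        E.facePerm.SameCycle d2 d3 :=
  statement11_general G E hmin h4 h9
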